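/- Let Q be a group, Ω a set, and ω : Ω → Q a function. Let F(ω) be the group presented with generating set Ω × Q and relators (m,q)⁻¹(n,p)⁻¹(m,q)(n, p q⁻¹(ω m)q) for all m, n ∈ Ω and p, q ∈ Q. Then: the assignment (m,q)^p = (m, qp) on generators extends to a well-defined action of Q on F(ω) by group automorphisms; the assignment ∂(m,q) = q⁻¹(ω m)q on generators extends to a group homomorphism ∂ : F(ω) → Q; (∂ : F(ω) → Q) with this action is a crossed module; and it is the free crossed Q-module on ω: for every crossed module (ν : N → Q) and every function f : Ω → N with ν(f(m)) = ω(m) for all m ∈ Ω, there is a unique group homomorphism φ : F(ω) → N satisfying ν ∘ φ = ∂, φ(x^q) = (φ x)^q for all x ∈ F(ω) and q ∈ Q, and φ(m, 1) = f(m) for all m ∈ Ω. -/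

import Mathlib

/-!
The relators say exactly that `(n, p) ^ ∂(m, q) = (m, q)⁻¹ (n, p) (m, q)`, i.e. CM2 on
generators. So a map `g : Ω × Q → G` extends to `F(ω)` as soon as it turns this rule into
conjugation in `G`, and all the structure arises this way: `∂` from conjugation in `Q`, the
action of `p` from `(m, q) ↦ (m, q p)`, and the universal map to `(ν : N → Q)` from
`(m, q) ↦ f(m) ^ q`, which respects the rule by CM1 and CM2 in `N`. Identities between
homomorphisms out of `F(ω)` are checked on generators; only CM2 for `F(ω)`, which is not
additive in `x` inside `n ^ ∂x`, needs an induction on `x`. Uniqueness holds because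
`(m, q) = (m, 1) ^ q`.
-/

universe u

/-- A crossed module `(μ : M → P)`: groups `M`, `P`, a (right) action of `P` on `M` by
group automorphisms, written `act m p` for `m ^ p`, and a homomorphism `μ : M →* P`
satisfying CM1: `μ (m ^ p) = p⁻¹ * μ m * p` and CM2: `n ^ (μ m) = m⁻¹ * n * m`. -/
structure CrossedModule (M P : Type u) [Group M] [Group P] where
  μ : M →* P
  act : M → P → M
  act_mul : ∀ m n p, act (m * n) p = act m p * act n p
  act_one : ∀ m, act m 1 = m
  act_act : ∀ m p q, act (act m p) q = act m (p * q)
  cm1 : ∀ m p, μ (act m p) = p⁻¹ * μ m * p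
  cm2 : ∀ m n, act n (μ m) = m⁻¹ * n * m

namespace CrossedModule

variable {M P : Type u} [Group M] [Group P] (X : CrossedModule M P)

theorem one_act (p : P) : X.act 1 p = 1 :=
  left_eq_mul.mp (by rw [← X.act_mul, one_mul])

def actHom (p : P) : M →* M where
  toFun m := X.act m p
  map_one' := X.one_act p
  map_mul' m n := X.act_mul m n p

@[simp]
theorem actHom_apply (m : M) (p : P) : X.actHom p m = X.act m p := rfl

end CrossedModule

def FreeCrossedModule.relators {Ω Q : Type u} [Group Q] (ω : Ω → Q) :
    Set (FreeGroup (Ω × Q)) :=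
  {r | ∃ (m n : Ω) (p q : Q),
    r = (FreeGroup.of (m, q))⁻¹ * (FreeGroup.of (n, p))⁻¹ * FreeGroup.of (m, q) *
      FreeGroup.of (n, p * q⁻¹ * ω m * q)}

abbrev FreeCrossedModule {Ω Q : Type u} [Group Q] (ω : Ω → Q) : Type u :=
  PresentedGroup (FreeCrossedModule.relators ω)

namespace FreeCrossedModule

open PresentedGroup (of)

variable {Ω Q : Type u} [Group Q] {ω : Ω → Q}

def RespectsRelators {G : Type*} [Group G] (ω : Ω → Q) (g : Ω × Q → G) : Prop :=
  ∀ m n p q, g (n, p * q⁻¹ * ω m * q) = (g (m, q))⁻¹ * g (n, p) * g (m, q)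

section Lift

variable {G : Type*} [Group G] {g : Ω × Q → G}

theorem lift_relators_eq_one (hg : RespectsRelators ω g) :
    ∀ r ∈ relators ω, FreeGroup.lift g r = 1 := by
  rintro _ ⟨m, n, p, q, rfl⟩
  simp only [map_mul, map_inv, FreeGroup.lift_apply_of]
  rw [hg]
  group

def lift (hg : RespectsRelators ω g) : FreeCrossedModule ω →* G :=
  PresentedGroup.toGroup (lift_relators_eq_one hg)

@[simp]
theorem lift_of (hg : RespectsRelators ω g) (x : Ω × Q) : lift hg (of x) = g x :=
  PresentedGroup.toGroup.of _

end Lift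

theorem respectsRelators_of : RespectsRelators ω (of : Ω × Q → FreeCrossedModule ω) := by
  intro m n p q
  have h : (of (m, q))⁻¹ * (of (n, p))⁻¹ * of (m, q) * of (n, p * q⁻¹ * ω m * q) =
      (1 : FreeCrossedModule ω) := by
    have h := PresentedGroup.one_of_mem (rels := relators ω) ⟨m, n, p, q, rfl⟩
    simp only [map_mul, map_inv] at h
    exact h
  rw [eq_comm, ← inv_mul_eq_one, ← h]
  group

variable (ω)

def boundary : FreeCrossedModule ω →* Q :=
  lift (g := fun x => x.2⁻¹ * ω x.1 * x.2) fun m n p q => by group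

@[simp]
theorem boundary_of (m : Ω) (q : Q) : boundary ω (of (m, q)) = q⁻¹ * ω m * q :=
  lift_of _ _

def act (p : Q) : FreeCrossedModule ω →* FreeCrossedModule ω :=
  lift (g := fun x => of (x.1, x.2 * p)) fun m n p₀ q => by
    have h : p₀ * q⁻¹ * ω m * q * p = p₀ * p * (q * p)⁻¹ * ω m * (q * p) := by group
    simp only [h, respectsRelators_of m n]

@[simp]
theorem act_of (m : Ω) (q p : Q) : act ω p (of (m, q)) = of (m, q * p) :=
  lift_of _ _

theorem act_one : act ω 1 = MonoidHom.id _ := by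
  ext ⟨m, q⟩; simp

theorem act_comp_act (p q : Q) : (act ω q).comp (act ω p) = act ω (p * q) := by
  ext ⟨m, r⟩; simp [mul_assoc]

theorem boundary_comp_act (p : Q) :
    (boundary ω).comp (act ω p) = ((MulAut.conj p)⁻¹).toMonoidHom.comp (boundary ω) := by
  ext ⟨m, q⟩
  simp only [MonoidHom.coe_comp, Function.comp_apply, act_of, boundary_of, mul_inv_rev,
    MulEquiv.toMonoidHom_eq_coe, MonoidHom.coe_coe, MulAut.coe_inv, MulAut.conj_symm_apply]
  group

theorem of_mul_boundary (x : FreeCrossedModule ω) (n : Ω) (p : Q) :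
    of (n, p * boundary ω x) = x⁻¹ * of (n, p) * x := by
  have hx : x ∈ Subgroup.closure (Set.range of) := by simp
  induction hx using Subgroup.closure_induction generalizing p with
  | mem _ hy =>
    obtain ⟨⟨m, q⟩, rfl⟩ := hy
    simpa only [boundary_of, ← mul_assoc] using respectsRelators_of m n p q
  | one => simp
  | mul a b _ _ iha ihb => simp only [map_mul, ← mul_assoc, ihb, iha]; group
  | inv a _ ih =>
    have h := ih (p * (boundary ω a)⁻¹)
    rw [inv_mul_cancel_right] at h
    rw [map_inv, h]
    group

theorem act_boundary (x : FreeCrossedModule ω) :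
    act ω (boundary ω x) = ((MulAut.conj x)⁻¹).toMonoidHom := by
  ext ⟨m, q⟩; simp [of_mul_boundary]

def crossedModule : CrossedModule (FreeCrossedModule ω) Q where
  μ := boundary ω
  act x p := act ω p x
  act_mul _ _ p := map_mul (act ω p) _ _
  act_one x := DFunLike.congr_fun (act_one ω) x
  act_act x p q := DFunLike.congr_fun (act_comp_act ω p q) x
  cm1 x p := by simpa [MulAut.conj_inv_apply] using DFunLike.congr_fun (boundary_comp_act ω p) x
  cm2 x y := by simpa [MulAut.conj_inv_apply] using DFunLike.congr_fun (act_boundary ω x) y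

section Universal

variable {ω} {N : Type u} [Group N] (Z : CrossedModule N Q) {f : Ω → N}

theorem respectsRelators_act (hf : ∀ m, Z.μ (f m) = ω m) :
    RespectsRelators ω fun x => Z.act (f x.1) x.2 := by
  intro m n p q
  have hμ : Z.μ (Z.act (f m) q) = q⁻¹ * ω m * q := by rw [Z.cm1, hf]
  simp only [mul_assoc p, ← hμ, ← Z.act_act, Z.cm2]

def universalHom (hf : ∀ m, Z.μ (f m) = ω m) : FreeCrossedModule ω →* N :=
  lift (respectsRelators_act Z hf)

variable (hf : ∀ m, Z.μ (f m) = ω m)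

theorem μ_universalHom (x : FreeCrossedModule ω) : Z.μ (universalHom Z hf x) = boundary ω x := by
  have h : Z.μ.comp (universalHom Z hf) = boundary ω := by
    ext ⟨m, q⟩; simp [universalHom, Z.cm1, hf]
  exact DFunLike.congr_fun h x

theorem universalHom_act (x : FreeCrossedModule ω) (p : Q) :
    universalHom Z hf (act ω p x) = Z.act (universalHom Z hf x) p := by
  have h : (universalHom Z hf).comp (act ω p) = (Z.actHom p).comp (universalHom Z hf) := by
    ext ⟨m, q⟩; simp [universalHom, Z.act_act]
  exact DFunLike.congr_fun h x

theorem universalHom_of_one (m : Ω) : universalHom Z hf (of (m, 1)) = f m := by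
  simp [universalHom, Z.act_one]

theorem hom_ext_of_equivariant {ψ₁ ψ₂ : FreeCrossedModule ω →* N}
    (h₁ : ∀ x p, ψ₁ (act ω p x) = Z.act (ψ₁ x) p) (h₂ : ∀ x p, ψ₂ (act ω p x) = Z.act (ψ₂ x) p)
    (h : ∀ m, ψ₁ (of (m, 1)) = ψ₂ (of (m, 1))) : ψ₁ = ψ₂ := by
  ext ⟨m, q⟩
  have hq : (of (m, q) : FreeCrossedModule ω) = act ω q (of (m, 1)) := by simp
  rw [hq, h₁, h₂, h]

end Universal

end FreeCrossedModule

/-- Let `Q` be a group, `Ω` a set, `ω : Ω → Q`, and let `F(ω)` be the group presented with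
generating set `Ω × Q` and relators `(m,q)⁻¹ (n,p)⁻¹ (m,q) (n, p q⁻¹ (ω m) q)` for
`m, n ∈ Ω`, `p, q ∈ Q`.  Then `(m,q) ^ p = (m, q p)` extends to a well-defined action of `Q`
on `F(ω)` by automorphisms, `∂ (m,q) = q⁻¹ (ω m) q` extends to a homomorphism
`∂ : F(ω) → Q`, the result is a crossed module, and it is the free crossed `Q`-module on
`ω`: for every crossed module `(ν : N → Q)` and function `f : Ω → N` with `ν (f m) = ω m`,
there is a unique homomorphism `φ : F(ω) → N` with `ν ∘ φ = ∂`, `φ (x ^ q) = (φ x) ^ q`,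
and `φ (m, 1) = f m`. -/
theorem free_crossed_module {Ω Q : Type u} [Group Q] (ω : Ω → Q)
    (R : Set (FreeGroup (Ω × Q)))
    (hR : R = {r | ∃ (m n : Ω) (p q : Q),
      r = (FreeGroup.of (m, q))⁻¹ * (FreeGroup.of (n, p))⁻¹ * FreeGroup.of (m, q) *
          FreeGroup.of (n, p * q⁻¹ * ω m * q)}) :
    ∃ X : CrossedModule (PresentedGroup R) Q,
      (∀ (m : Ω) (q p : Q), X.act (PresentedGroup.of (m, q)) p = PresentedGroup.of (m, q * p)) ∧
      (∀ (m : Ω) (q : Q), X.μ (PresentedGroup.of (m, q)) = q⁻¹ * ω m * q) ∧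
      ∀ (N : Type u) [Group N] (Z : CrossedModule N Q) (f : Ω → N),
        (∀ m, Z.μ (f m) = ω m) →
        ∃! φ : PresentedGroup R →* N,
          (∀ x, Z.μ (φ x) = X.μ x) ∧
          (∀ x q, φ (X.act x q) = Z.act (φ x) q) ∧
          ∀ m : Ω, φ (PresentedGroup.of (m, 1)) = f m := by
  obtain rfl : R = FreeCrossedModule.relators ω := hR
  open FreeCrossedModule in
  exact ⟨crossedModule ω, act_of ω, boundary_of ω, fun N _ Z f hf =>
    ⟨universalHom Z hf,
      ⟨μ_universalHom Z hf, universalHom_act Z hf, universalHom_of_one Z hf⟩,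
      fun ψ ⟨_, hψ, hψf⟩ => hom_ext_of_equivariant Z hψ (universalHom_act Z hf)
        fun m => (hψf m).trans (universalHom_of_one Z hf m).symm⟩⟩
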